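/- arXiv:2412.14635 — 6 statements merged into one kernel-verified Lean document; each statement's English description precedes it below -/
import Mathlib

section
/- Let d ≥ 3 and let (t_r)_{r≥2} be nonnegative integers with t_d = 0 satisfying Melchior's inequality t_2 ≥ 3 + Σ_{r≥4} (r-3) t_r, and suppose the denominator 3 - 2d + Σ_{r≥2}(r-1)t_r is positive. Then the characteristic number γ = (9 - 5d + Σ_{r≥2}(3r-4)t_r) / (3 - 2d + Σ_{r≥2}(r-1)t_r) satisfies γ ≤ 5/2. Moreover γ = 5/2 if and only if t_2 = 3 + Σ_{r≥4}(r-3)t_r. -/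
open Finset

lemma icc_split (N : ℕ) (hN : 3 ≤ N) :
    Finset.Icc 2 N = insert 2 (insert 3 (Finset.Icc 4 N)) := by
  ext x
  simp only [Finset.mem_Icc, Finset.mem_insert]
  omega

/-- Hirzebruch's bound `γ ≤ 5/2` deduced from Melchior's inequality, with equality
iff Melchior's inequality is an equality. -/
theorem stmt_0 (d N : ℕ) (t : ℕ → ℕ) (hd : 3 ≤ d)
    (hsupp : ∀ r, N < r → t r = 0) (htd : t d = 0)
    (hMelchior : (t 2 : ℤ) ≥ 3 + ∑ r ∈ Finset.Icc 4 N, ((r : ℤ) - 3) * t r)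
    (hden : (0 : ℤ) < 3 - 2 * d + ∑ r ∈ Finset.Icc 2 N, ((r : ℤ) - 1) * t r) :
    (((9 - 5 * d + ∑ r ∈ Finset.Icc 2 N, (3 * (r : ℤ) - 4) * t r : ℤ) : ℚ) /
      ((3 - 2 * d + ∑ r ∈ Finset.Icc 2 N, ((r : ℤ) - 1) * t r : ℤ) : ℚ) ≤ 5 / 2) ∧
    ((((9 - 5 * d + ∑ r ∈ Finset.Icc 2 N, (3 * (r : ℤ) - 4) * t r : ℤ) : ℚ) /
      ((3 - 2 * d + ∑ r ∈ Finset.Icc 2 N, ((r : ℤ) - 1) * t r : ℤ) : ℚ) = 5 / 2) ↔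
      (t 2 : ℤ) = 3 + ∑ r ∈ Finset.Icc 4 N, ((r : ℤ) - 3) * t r) := by
  set A : ℤ := 9 - 5 * d + ∑ r ∈ Finset.Icc 2 N, (3 * (r : ℤ) - 4) * t r with hA
  set B : ℤ := 3 - 2 * d + ∑ r ∈ Finset.Icc 2 N, ((r : ℤ) - 1) * t r with hB
  set S : ℤ := ∑ r ∈ Finset.Icc 4 N, ((r : ℤ) - 3) * t r with hS
  have hsplit : ∑ r ∈ Finset.Icc 2 N, ((r : ℤ) - 3) * t r = S - t 2 := by
    rcases lt_or_ge N 2 with h | h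
    · have h2 : t 2 = 0 := hsupp 2 h
      have e1 : Finset.Icc 2 N = ∅ := by rw [Finset.Icc_eq_empty]; omega
      have e2 : Finset.Icc 4 N = ∅ := by rw [Finset.Icc_eq_empty]; omega
      simp [hS, e1, e2, h2]
    · rcases lt_or_ge N 3 with h3 | h3
      · have hN2 : N = 2 := by omega
        subst hN2
        have e2 : Finset.Icc 4 2 = ∅ := by rw [Finset.Icc_eq_empty]; omega
        simp [hS, e2, Finset.Icc_self]
      · rw [icc_split N h3, Finset.sum_insert (by simp [Finset.mem_Icc]),
          Finset.sum_insert (by simp [Finset.mem_Icc])]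
        push_cast
        ring
  have hkey0 : 2 * A - 5 * B = 3 + ∑ r ∈ Finset.Icc 2 N, ((r : ℤ) - 3) * t r := by
    have e : ∑ r ∈ Finset.Icc 2 N, ((r : ℤ) - 3) * t r
        = ∑ r ∈ Finset.Icc 2 N,
            (2 * ((3 * (r : ℤ) - 4) * t r) - 5 * (((r : ℤ) - 1) * t r)) :=
      Finset.sum_congr rfl (fun r _ => by ring)
    rw [hA, hB, e, Finset.sum_sub_distrib, ← Finset.mul_sum, ← Finset.mul_sum]
    ring
  have hkey : 2 * A - 5 * B = 3 + S - t 2 := by rw [hkey0, hsplit]; ring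
  have hBQ : (0 : ℚ) < (B : ℚ) := by exact_mod_cast hden
  have h2 : (0 : ℚ) < 2 := by norm_num
  constructor
  · rw [div_le_div_iff₀ hBQ h2]
    have h' : A * 2 ≤ 5 * B := by omega
    have h'' : ((A : ℚ)) * 2 ≤ 5 * B := by exact_mod_cast h'
    linarith
  · rw [div_eq_div_iff hBQ.ne' h2.ne']
    constructor
    · intro h
      have h' : (A : ℚ) * 2 = 5 * B := h
      have : A * 2 = 5 * B := by exact_mod_cast h'
      omega
    · intro h
      have : A * 2 = 5 * B := by omega
      exact_mod_cast congrArg (fun x : ℤ => (x : ℚ)) this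
end

section
/- Let d ≥ 6 and (t_r)_{r≥2} nonnegative integers with D = 3 - 2d + Σ_{r≥2}(r-1)t_r > 0. If (9 - 5d + Σ_{r≥2}(3r-4)t_r)/D ≥ 8/3 and the stronger Hirzebruch inequality t_2 + (3/4)t_3 ≥ d + Σ_{r≥5}(r-4)t_r holds, then Σ_{r≥5}(r-4)t_r + d + 2t_2 ≤ 9; in particular d ≤ 9. -/
/-!
Clearing the denominator, the slope condition says `3 · (9 - 5d + Σ (3r-4) t_r) ≥ 8 · (3 - 2d + Σ (r-1) t_r)`,
and since `3 (3r-4) - 8 (r-1) = r - 4` this is `Σ_{r≥5} (r-4) t_r ≥ 2 t_2 + t_3 - 3 - d`.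
Three times this plus four times the Hirzebruch inequality is exactly the bound
`Σ_{r≥5} (r-4) t_r + d + 2 t_2 ≤ 9`.
-/

open Finset

theorem sum_Icc_eq_add_sum_Icc_succ {M : Type*} [AddCommMonoid M] {N : ℕ} {g : ℕ → M}
    (hg : ∀ r, N < r → g r = 0) (a : ℕ) :
    ∑ r ∈ Icc a N, g r = g a + ∑ r ∈ Icc (a + 1) N, g r := by
  rcases le_or_gt a N with ha | ha
  · rw [Icc_eq_cons_Ioc ha, sum_cons, Icc_add_one_left_eq_Ioc]
  · rw [Icc_eq_empty_of_lt ha, Icc_eq_empty_of_lt (by omega), hg a ha, zero_add]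

theorem three_mul_sum_sub_eight_mul_sum {R : Type*} [CommRing R] (s : Finset ℕ) (t : ℕ → R) :
    3 * ∑ r ∈ s, (3 * (r : R) - 4) * t r - 8 * ∑ r ∈ s, ((r : R) - 1) * t r
      = ∑ r ∈ s, ((r : R) - 4) * t r := by
  rw [mul_sum, mul_sum, ← sum_sub_distrib]
  exact sum_congr rfl fun r _ => by ring

theorem sum_Icc_two_sub_four_mul {R : Type*} [CommRing R] {N : ℕ} {t : ℕ → R}
    (ht : ∀ r, N < r → t r = 0) :
    ∑ r ∈ Icc 2 N, ((r : R) - 4) * t r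
      = -2 * t 2 - t 3 + ∑ r ∈ Icc 5 N, ((r : R) - 4) * t r := by
  have hg : ∀ r, N < r → ((r : R) - 4) * t r = 0 := fun r hr => by rw [ht r hr, mul_zero]
  rw [sum_Icc_eq_add_sum_Icc_succ hg, sum_Icc_eq_add_sum_Icc_succ hg,
    sum_Icc_eq_add_sum_Icc_succ hg]
  push_cast
  ring

theorem sum_Icc_five_sub_four_mul_nonneg (N : ℕ) (t : ℕ → ℕ) :
    0 ≤ ∑ r ∈ Icc 5 N, ((r : ℚ) - 4) * t r := by
  refine sum_nonneg fun r hr => mul_nonneg ?_ (Nat.cast_nonneg _)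
  have : (5 : ℚ) ≤ r := by exact_mod_cast (mem_Icc.mp hr).1
  linarith

theorem stmt_3_general (d N : ℕ) (t : ℕ → ℕ)
    (hsupp : ∀ r, N < r → t r = 0)
    (hden : (0 : ℤ) < 3 - 2 * d + ∑ r ∈ Finset.Icc 2 N, ((r : ℤ) - 1) * t r)
    (hslope : (((9 - 5 * d + ∑ r ∈ Finset.Icc 2 N, (3 * (r : ℤ) - 4) * t r : ℤ) : ℚ) /
      ((3 - 2 * d + ∑ r ∈ Finset.Icc 2 N, ((r : ℤ) - 1) * t r : ℤ) : ℚ) ≥ 8 / 3))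
    (hHir : (t 2 : ℚ) + (3 / 4) * t 3 ≥
      (d : ℚ) + ∑ r ∈ Finset.Icc 5 N, ((r : ℚ) - 4) * t r) :
    ((∑ r ∈ Finset.Icc 5 N, ((r : ℤ) - 4) * t r) + d + 2 * t 2 ≤ 9) ∧ d ≤ 9 := by
  have hcleared := (le_div_iff₀ (by exact_mod_cast hden)).mp hslope
  push_cast at hcleared
  have hkey := three_mul_sum_sub_eight_mul_sum (Icc 2 N) (fun r => (t r : ℚ))
  rw [sum_Icc_two_sub_four_mul fun r hr => by simp [hsupp r hr]] at hkey
  have hbound : (∑ r ∈ Icc 5 N, ((r : ℚ) - 4) * t r) + d + 2 * t 2 ≤ 9 := by linarith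
  refine ⟨by exact_mod_cast hbound, ?_⟩
  have : (d : ℚ) ≤ 9 := by
    linarith [sum_Icc_five_sub_four_mul_nonneg N t, (t 2).cast_nonneg (α := ℚ)]
  exact_mod_cast this

/-- Combining `γ ≥ 8/3` with the stronger Hirzebruch inequality forces
`Σ_{r≥5}(r-4)t_r + d + 2t_2 ≤ 9`, in particular `d ≤ 9`. -/
theorem stmt_3 (d N : ℕ) (t : ℕ → ℕ) (hd : 6 ≤ d)
    (hsupp : ∀ r, N < r → t r = 0)
    (hden : (0 : ℤ) < 3 - 2 * d + ∑ r ∈ Finset.Icc 2 N, ((r : ℤ) - 1) * t r)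
    (hslope : (((9 - 5 * d + ∑ r ∈ Finset.Icc 2 N, (3 * (r : ℤ) - 4) * t r : ℤ) : ℚ) /
      ((3 - 2 * d + ∑ r ∈ Finset.Icc 2 N, ((r : ℤ) - 1) * t r : ℤ) : ℚ) ≥ 8 / 3))
    (hHir : (t 2 : ℚ) + (3 / 4) * t 3 ≥
      (d : ℚ) + ∑ r ∈ Finset.Icc 5 N, ((r : ℚ) - 4) * t r) :
    ((∑ r ∈ Finset.Icc 5 N, ((r : ℤ) - 4) * t r) + d + 2 * t 2 ≤ 9) ∧ d ≤ 9 :=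
  stmt_3_general d N t hsupp hden hslope hHir
end

section
/- For the CEVA arrangements with d = 3n lines, t_3 = n² triple points and t_n = 3 n-fold points (n ≥ 4), the characteristic number equals γ(L_n) = (5n² - 6n - 3)/(2n² - 3n); this sequence is strictly decreasing in n and converges to 5/2 as n → ∞. -/
/-- The characteristic number of the `n`-th CEVA arrangement (`d = 3n` lines,
`t_3 = n²`, `t_n = 3`, `n ≥ 4`). -/
noncomputable def cevaGamma (n : ℕ) : ℚ :=
  ((9 - 5 * (3 * n) + (3 * 3 - 4) * (n : ℤ) ^ 2 + (3 * (n : ℤ) - 4) * 3 : ℤ) : ℚ) /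
    ((3 - 2 * (3 * n) + (3 - 1) * (n : ℤ) ^ 2 + ((n : ℤ) - 1) * 3 : ℤ) : ℚ)

lemma cevaGamma_eq (n : ℕ) :
    cevaGamma n = (5 * (n : ℚ) ^ 2 - 6 * n - 3) / (2 * (n : ℚ) ^ 2 - 3 * n) := by
  unfold cevaGamma
  congr 1 <;> push_cast <;> ring

/-- The CEVA characteristic numbers equal `(5n² - 6n - 3)/(2n² - 3n)`, form a strictly
decreasing sequence, and converge to `5/2`. -/
theorem stmt_6 :
    (∀ n : ℕ, 4 ≤ n →
      cevaGamma n = ((5 * (n : ℚ) ^ 2 - 6 * n - 3) / (2 * (n : ℚ) ^ 2 - 3 * n))) ∧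
    (∀ n : ℕ, 4 ≤ n → cevaGamma (n + 1) < cevaGamma n) ∧
    Filter.Tendsto cevaGamma Filter.atTop (nhds (5 / 2)) := by
  refine ⟨fun n _ => cevaGamma_eq n, ?_, ?_⟩
  · intro n hn
    have hx : (4 : ℚ) ≤ (n : ℚ) := by exact_mod_cast hn
    rw [cevaGamma_eq, cevaGamma_eq]
    push_cast
    set x : ℚ := (n : ℚ) with hxdef
    have h1 : 0 < 2 * x ^ 2 - 3 * x := by nlinarith
    have h2 : 0 < 2 * (x + 1) ^ 2 - 3 * (x + 1) := by nlinarith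
    rw [div_lt_div_iff₀ h2 h1]
    nlinarith
  · have hinv : Filter.Tendsto (fun n : ℕ => ((n : ℚ))⁻¹) Filter.atTop (nhds 0) :=
      Filter.Tendsto.inv_tendsto_atTop tendsto_natCast_atTop_atTop
    have hnum : Filter.Tendsto (fun n : ℕ => 5 - 6 * ((n : ℚ))⁻¹ - 3 * ((n : ℚ))⁻¹ ^ 2)
        Filter.atTop (nhds 5) := by
      have := ((tendsto_const_nhds (x := (5 : ℚ))).sub (hinv.const_mul 6)).sub
        ((hinv.pow 2).const_mul 3)
      simpa using this
    have hden : Filter.Tendsto (fun n : ℕ => 2 - 3 * ((n : ℚ))⁻¹)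
        Filter.atTop (nhds 2) := by
      have := (tendsto_const_nhds (x := (2 : ℚ))).sub (hinv.const_mul 3)
      simpa using this
    have hdiv := hnum.div hden (by norm_num)
    have : (5 : ℚ) / 2 = 5 / 2 := rfl
    refine Filter.Tendsto.congr' ?_ hdiv
    filter_upwards [Filter.eventually_ge_atTop 2] with n hn
    have hx : (2 : ℚ) ≤ (n : ℚ) := by exact_mod_cast hn
    have hx0 : (n : ℚ) ≠ 0 := by positivity
    have h2 : 2 * (n : ℚ) - 3 ≠ 0 := by nlinarith
    have hd : 2 * (n : ℚ) ^ 2 - 3 * n ≠ 0 := by nlinarith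
    have hd2 : 2 - 3 * ((n : ℚ))⁻¹ ≠ 0 := by
      have : (3 : ℚ) * (n : ℚ)⁻¹ ≤ 3 / 2 := by
        rw [mul_comm, ← div_eq_inv_mul]
        rw [div_le_div_iff₀ (by positivity) (by norm_num)]
        nlinarith
      nlinarith
    rw [cevaGamma_eq, Pi.div_apply, div_eq_div_iff hd2 hd]
    field_simp
end

section
/- Let d ≥ 0, k ≥ 3 and (t_r)_{r≥2} nonnegative integers. Assume the Hirzebruch-type inequality 5k + t_2 + t_3 ≥ d + Σ_{r≥5}(r-4)t_r, and assume the denominator 3 - 2d - 2k + Σ_{r≥2}(r-1)t_r is positive. Then γ = (9 - 8k - 5d + Σ_{r≥2}(3r-4)t_r)/(3 - 2d - 2k + Σ_{r≥2}(r-1)t_r) < 8/3. -/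
/-!
Clearing denominators, `8 · den - 3 · num = 8k - 3 - d - ∑ (r - 4) t_r`, since
`8 (r - 1) - 3 (3r - 4) = -(r - 4)`. Splitting off `r = 2, 3, 4`, the Hirzebruch-type inequality
gives `∑ (r - 4) t_r ≤ 5k - d - t_2`, so `8 · den - 3 · num ≥ 3k - 3 + t_2 > 0`.
-/

open Finset

theorem Finset.sum_Icc_eq_sum_Icc_of_le {M : Type*} [AddCommMonoid M] {g : ℕ → M}
    {a N L : ℕ} (hNL : N ≤ L) (hg : ∀ r, N < r → g r = 0) :
    ∑ r ∈ Icc a N, g r = ∑ r ∈ Icc a L, g r :=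
  sum_subset (Icc_subset_Icc_right hNL) fun r hr hrN ↦
    hg r (by simp only [mem_Icc] at hr hrN; omega)

theorem Finset.sum_Icc_two_eq_add_sum_Icc_five {M : Type*} [AddCommMonoid M] {g : ℕ → M}
    {N : ℕ} (hg : ∀ r, N < r → g r = 0) :
    ∑ r ∈ Icc 2 N, g r = g 2 + g 3 + g 4 + ∑ r ∈ Icc 5 N, g r := by
  have hL : ∀ {a}, ∑ r ∈ Icc a N, g r = ∑ r ∈ Icc a (max N 4), g r :=
    sum_Icc_eq_sum_Icc_of_le (le_max_left N 4) hg
  have hsplit : Icc 2 (max N 4) = {2, 3, 4} ∪ Icc 5 (max N 4) := by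
    ext r; simp only [mem_Icc, mem_union, mem_insert, mem_singleton]; omega
  rw [hL, hL, hsplit, sum_union (by simp), sum_insert (by simp), sum_insert (by simp),
    sum_singleton]
  abel

theorem Int.cast_div_lt_div_of_mul_lt {a b p q : ℤ} (hb : 0 < b) (hq : 0 < q)
    (h : q * a < p * b) : (a : ℚ) / b < p / q := by
  rw [div_lt_div_iff₀ (by exact_mod_cast hb) (by exact_mod_cast hq)]
  exact_mod_cast (by linarith : a * q < p * b)

/-- Conic-line arrangements: the Hirzebruch-type inequality of Pardini–Pokora forces
the characteristic number to be `< 8/3`. -/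
theorem stmt_7 (d k N : ℕ) (t : ℕ → ℕ) (hk : 3 ≤ k)
    (hsupp : ∀ r, N < r → t r = 0)
    (hHir : (5 * k + t 2 + t 3 : ℤ) ≥ d + ∑ r ∈ Finset.Icc 5 N, ((r : ℤ) - 4) * t r)
    (hden : (0 : ℤ) < 3 - 2 * d - 2 * k + ∑ r ∈ Finset.Icc 2 N, ((r : ℤ) - 1) * t r) :
    (((9 - 8 * k - 5 * d + ∑ r ∈ Finset.Icc 2 N, (3 * (r : ℤ) - 4) * t r : ℤ) : ℚ) /
      ((3 - 2 * d - 2 * k + ∑ r ∈ Finset.Icc 2 N, ((r : ℤ) - 1) * t r : ℤ) : ℚ)) < 8 / 3 := by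
  have hsplit : ∑ r ∈ Icc 2 N, ((r : ℤ) - 4) * t r
      = -2 * t 2 - t 3 + ∑ r ∈ Icc 5 N, ((r : ℤ) - 4) * t r := by
    rw [sum_Icc_two_eq_add_sum_Icc_five fun r hr ↦ by simp [hsupp r hr]]
    push_cast; ring
  have hcomb : 8 * ∑ r ∈ Icc 2 N, ((r : ℤ) - 1) * t r - 3 * ∑ r ∈ Icc 2 N, (3 * (r : ℤ) - 4) * t r
      = -∑ r ∈ Icc 2 N, ((r : ℤ) - 4) * t r := by
    rw [mul_sum, mul_sum, ← sum_sub_distrib, ← sum_neg_distrib]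
    exact sum_congr rfl fun r _ ↦ by ring
  have hkey : 3 * (9 - 8 * k - 5 * d + ∑ r ∈ Icc 2 N, (3 * (r : ℤ) - 4) * t r)
      < 8 * (3 - 2 * d - 2 * k + ∑ r ∈ Icc 2 N, ((r : ℤ) - 1) * t r) := by
    have : (3 : ℤ) ≤ k := by exact_mod_cast hk
    have : (0 : ℤ) ≤ t 2 := by positivity
    linarith
  convert Int.cast_div_lt_div_of_mul_lt (p := 8) (q := 3) hden (by norm_num) hkey using 2 <;> norm_num
end

section
/- Let n ≥ 2 and let (t_r)_{r≥2} be nonnegative integers satisfying 4n - t_2 + Σ_{r≥3}(r-4)t_r ≤ 72. Then the following are equivalent: (a) -2n + Σ_{r≥2}(3r-4)t_r = 3·(24 - 2n + Σ_{r≥2}(r-1)t_r); (b) 4n = 72 + t_2 + t_3 and t_r = 0 for all r ≥ 4. -/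
open Finset

/-- Combinatorial characterization of K3 pairs with log Chern slope equal to 3. -/
theorem stmt_11 (n N : ℕ) (t : ℕ → ℕ) (hn : 2 ≤ n)
    (hsupp : ∀ r, N < r → t r = 0)
    (hLP : (4 * n - (t 2 : ℤ) + ∑ r ∈ Finset.Icc 3 N, ((r : ℤ) - 4) * t r) ≤ 72) :
    ((-2 * (n : ℤ) + ∑ r ∈ Finset.Icc 2 N, (3 * (r : ℤ) - 4) * t r) =
        3 * (24 - 2 * n + ∑ r ∈ Finset.Icc 2 N, ((r : ℤ) - 1) * t r)) ↔
      (4 * n = 72 + t 2 + t 3 ∧ ∀ r, 4 ≤ r → t r = 0) := by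
  set M := max N 3 with hMdef
  have hMN : N ≤ M := le_max_left _ _
  have hM3 : 3 ≤ M := le_max_right _ _
  have ext : ∀ (a : ℕ) (f : ℕ → ℤ),
      ∑ r ∈ Finset.Icc a N, f r * t r = ∑ r ∈ Finset.Icc a M, f r * t r := by
    intro a f
    refine Finset.sum_subset (Finset.Icc_subset_Icc_right hMN) ?_
    intro x hx hx'
    have hNx : N < x := by
      simp only [Finset.mem_Icc] at hx hx'
      omega
    rw [hsupp x hNx]
    simp
  have split : ∀ (f : ℕ → ℤ),
      ∑ r ∈ Finset.Icc 2 M, f r * t r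
        = f 2 * t 2 + f 3 * t 3 + ∑ r ∈ Finset.Ioc 3 M, f r * t r := by
    intro f
    have h := Finset.sum_Ioc_consecutive (fun r => f r * (t r : ℤ))
      (by norm_num : (1:ℕ) ≤ 3) hM3
    have h13 : Finset.Ioc 1 3 = ({2, 3} : Finset ℕ) := by decide
    rw [show Finset.Icc 2 M = Finset.Ioc 1 M from (Finset.Icc_add_one_left_eq_Ioc 1 M).symm, ← h, h13]
    rw [Finset.sum_pair (by norm_num)]
  have split3 : ∀ (f : ℕ → ℤ),
      ∑ r ∈ Finset.Icc 3 M, f r * t r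
        = f 3 * t 3 + ∑ r ∈ Finset.Ioc 3 M, f r * t r := by
    intro f
    have h := Finset.sum_Ioc_consecutive (fun r => f r * (t r : ℤ))
      (by norm_num : (2:ℕ) ≤ 3) hM3
    have h23 : Finset.Ioc 2 3 = ({3} : Finset ℕ) := by decide
    rw [show Finset.Icc 3 M = Finset.Ioc 2 M from (Finset.Icc_add_one_left_eq_Ioc 2 M).symm, ← h, h23]
    rw [Finset.sum_singleton]
  have e1 : ∑ r ∈ Finset.Icc 2 N, (3 * (r : ℤ) - 4) * t r
      = (3 * (2:ℤ) - 4) * t 2 + (3 * (3:ℤ) - 4) * t 3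
        + ∑ r ∈ Finset.Ioc 3 M, (3 * (r : ℤ) - 4) * t r := by
    rw [ext 2 (fun r => 3 * (r : ℤ) - 4), split (fun r => 3 * (r : ℤ) - 4)]
    norm_num
  have e2 : ∑ r ∈ Finset.Icc 2 N, ((r : ℤ) - 1) * t r
      = ((2:ℤ) - 1) * t 2 + ((3:ℤ) - 1) * t 3
        + ∑ r ∈ Finset.Ioc 3 M, ((r : ℤ) - 1) * t r := by
    rw [ext 2 (fun r => (r : ℤ) - 1), split (fun r => (r : ℤ) - 1)]
    norm_num
  have e3 : ∑ r ∈ Finset.Icc 3 N, ((r : ℤ) - 4) * t r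
      = ((3:ℤ) - 4) * t 3 + ∑ r ∈ Finset.Ioc 3 M, ((r : ℤ) - 4) * t r := by
    rw [ext 3 (fun r => (r : ℤ) - 4), split3 (fun r => (r : ℤ) - 4)]
    norm_num
  set S0 := ∑ r ∈ Finset.Ioc 3 M, ((t r : ℤ)) with hS0
  set S2 := ∑ r ∈ Finset.Ioc 3 M, ((r : ℤ) - 1) * t r with hS2
  have h1 : ∑ r ∈ Finset.Ioc 3 M, (3 * (r : ℤ) - 4) * t r = 3 * S2 - S0 := by
    rw [hS2, hS0, Finset.mul_sum, ← Finset.sum_sub_distrib]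
    exact Finset.sum_congr rfl (fun x _ => by ring)
  have h3 : ∑ r ∈ Finset.Ioc 3 M, ((r : ℤ) - 4) * t r = S2 - 3 * S0 := by
    rw [hS2, hS0, show (3:ℤ) * ∑ r ∈ Finset.Ioc 3 M, ((t r : ℤ)) =
        ∑ r ∈ Finset.Ioc 3 M, 3 * ((t r : ℤ)) from Finset.mul_sum .., ← Finset.sum_sub_distrib]
    exact Finset.sum_congr rfl (fun x _ => by ring)
  have hS4 : ∑ r ∈ Finset.Ioc 3 M, ((r : ℤ) - 3) * t r = S2 - 2 * S0 := by
    rw [hS2, hS0, show (2:ℤ) * ∑ r ∈ Finset.Ioc 3 M, ((t r : ℤ)) =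
        ∑ r ∈ Finset.Ioc 3 M, 2 * ((t r : ℤ)) from Finset.mul_sum .., ← Finset.sum_sub_distrib]
    exact Finset.sum_congr rfl (fun x _ => by ring)
  rw [e3, h3] at hLP
  rw [e1, e2, h1]
  constructor
  · intro h
    -- key : 4n = 72 + t2 + t3 + S0
    have key : (4 * n : ℤ) = 72 + t 2 + t 3 + S0 := by linarith
    have hS4le : S2 - 2 * S0 ≤ 0 := by linarith
    have hS4nonneg : ∀ x ∈ Finset.Ioc 3 M, (0:ℤ) ≤ ((x : ℤ) - 3) * t x := by
      intro x hx
      have hx4 : 4 ≤ x := by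
        simp only [Finset.mem_Ioc] at hx
        omega
      have hx4' : (4:ℤ) ≤ (x:ℤ) := by exact_mod_cast hx4
      have : (1:ℤ) ≤ (x:ℤ) - 3 := by linarith
      positivity
    have hzero : ∑ r ∈ Finset.Ioc 3 M, ((r : ℤ) - 3) * t r = 0 := by
      rw [hS4]
      refine le_antisymm hS4le ?_
      rw [← hS4]
      exact Finset.sum_nonneg hS4nonneg
    have hterm : ∀ x ∈ Finset.Ioc 3 M, t x = 0 := by
      intro x hx
      have := (Finset.sum_eq_zero_iff_of_nonneg hS4nonneg).mp hzero x hx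
      have hx4 : 4 ≤ x := by
        simp only [Finset.mem_Ioc] at hx
        omega
      have hx4' : (4:ℤ) ≤ (x:ℤ) := by exact_mod_cast hx4
      have hpos : (0:ℤ) < (x:ℤ) - 3 := by linarith
      have : (t x : ℤ) = 0 := by
        rcases mul_eq_zero.mp this with h' | h'
        · omega
        · exact h'
      exact_mod_cast this
    have hS0zero : S0 = 0 := by
      rw [hS0]
      exact Finset.sum_eq_zero (fun x hx => by rw [hterm x hx]; simp)
    constructor
    · have : (4 * n : ℤ) = 72 + t 2 + t 3 := by rw [key, hS0zero]; ring
      exact_mod_cast this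
    · intro r hr
      by_cases hrM : r ≤ M
      · exact hterm r (Finset.mem_Ioc.mpr ⟨by omega, hrM⟩)
      · exact hsupp r (by omega)
  · rintro ⟨h4, hz⟩
    have hall : ∀ x ∈ Finset.Ioc 3 M, t x = 0 := by
      intro x hx
      exact hz x (by simp only [Finset.mem_Ioc] at hx; omega)
    have hS0zero : S0 = 0 := by
      rw [hS0]; exact Finset.sum_eq_zero (fun x hx => by rw [hall x hx]; simp)
    have hS2zero : S2 = 0 := by
      rw [hS2]; exact Finset.sum_eq_zero (fun x hx => by rw [hall x hx]; simp)
    have h4' : (4 * n : ℤ) = 72 + t 2 + t 3 := by exact_mod_cast h4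
    rw [hS0zero, hS2zero]
    linarith
end

section
/- Let n ≥ 2, and suppose nonnegative integers (t_r)_{r≥2} satisfy the two conditions: the denominator 24 - 2n + Σ_{r≥2}(r-1)t_r is positive and (-2n + Σ_{r≥2}(3r-4)t_r)/(24 - 2n + Σ_{r≥2}(r-1)t_r) ≥ 8/3. Then 10n + Σ_{r≥2}(r-4)t_r ≥ 192. If in addition the Laface–Pokora inequality 4n - t_2 + Σ_{r≥3}(r-4)t_r ≤ 72 holds, then 6n ≥ 120 + t_2. -/
open Finset

/-- Derivation of criterion (5.4): slope `≥ 8/3` forces `10n + Σ(r-4)t_r ≥ 192`, and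
together with the Laface–Pokora inequality, `6n ≥ 120 + t_2`. -/
theorem stmt_12 (n N : ℕ) (t : ℕ → ℕ) (hn : 2 ≤ n)
    (hsupp : ∀ r, N < r → t r = 0)
    (hden : (0 : ℤ) < 24 - 2 * n + ∑ r ∈ Finset.Icc 2 N, ((r : ℤ) - 1) * t r)
    (hslope : ((-2 * (n : ℤ) + ∑ r ∈ Finset.Icc 2 N, (3 * (r : ℤ) - 4) * t r : ℤ) : ℚ) /
      ((24 - 2 * n + ∑ r ∈ Finset.Icc 2 N, ((r : ℤ) - 1) * t r : ℤ) : ℚ) ≥ 8 / 3) :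
    (10 * (n : ℤ) + ∑ r ∈ Finset.Icc 2 N, ((r : ℤ) - 4) * t r ≥ 192) ∧
    ((4 * n - (t 2 : ℤ) + ∑ r ∈ Finset.Icc 3 N, ((r : ℤ) - 4) * t r ≤ 72) →
      6 * (n : ℤ) ≥ 120 + t 2) := by
  set A : ℤ := -2 * (n : ℤ) + ∑ r ∈ Finset.Icc 2 N, (3 * (r : ℤ) - 4) * t r with hA
  set D : ℤ := 24 - 2 * (n : ℤ) + ∑ r ∈ Finset.Icc 2 N, ((r : ℤ) - 1) * t r with hD
  have hDq : (0 : ℚ) < (D : ℚ) := by exact_mod_cast hden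
  have hkey : 8 * D ≤ A * 3 := by
    have := (div_le_div_iff₀ (by norm_num : (0:ℚ) < 3) hDq).mp hslope
    exact_mod_cast this
  set S1 : ℤ := ∑ r ∈ Finset.Icc 2 N, (r : ℤ) * t r with hS1
  set S0 : ℤ := ∑ r ∈ Finset.Icc 2 N, (t r : ℤ) with hS0
  have e1 : ∑ r ∈ Finset.Icc 2 N, ((r : ℤ) - 1) * t r = S1 - S0 := by
    simp [sub_mul, Finset.sum_sub_distrib]
    rfl
  have e2 : ∑ r ∈ Finset.Icc 2 N, (3 * (r : ℤ) - 4) * t r = 3 * S1 - 4 * S0 := by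
    simp [sub_mul, Finset.sum_sub_distrib, ← Finset.mul_sum, mul_assoc]
    rfl
  have e3 : ∑ r ∈ Finset.Icc 2 N, ((r : ℤ) - 4) * t r = S1 - 4 * S0 := by
    simp [sub_mul, Finset.sum_sub_distrib, ← Finset.mul_sum]
    rfl
  have hpart1 : 10 * (n : ℤ) + ∑ r ∈ Finset.Icc 2 N, ((r : ℤ) - 4) * t r ≥ 192 := by
    rw [e3]
    rw [hA, e2] at hkey
    rw [hD, e1] at hkey
    linarith
  refine ⟨hpart1, fun hLP => ?_⟩
  by_cases hN : 2 ≤ N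
  · have hsplit : ∑ r ∈ Finset.Icc 2 N, ((r : ℤ) - 4) * t r
        = ((2 : ℤ) - 4) * t 2 + ∑ r ∈ Finset.Icc 3 N, ((r : ℤ) - 4) * t r := by
      rw [← Finset.insert_Icc_add_one_left_eq_Icc hN, Finset.sum_insert (by simp)]
      norm_num
    rw [hsplit] at hpart1
    linarith
  · have h2 : t 2 = 0 := hsupp 2 (by omega)
    have hempty : Finset.Icc 2 N = (∅ : Finset ℕ) := Finset.Icc_eq_empty (by omega)
    rw [hempty, Finset.sum_empty] at hpart1
    rw [h2]
    push_cast
    omega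
end
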